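/- Let I be a finite set of instances and f : I → ℝ with f i > 0 for all i. Consider a sequence of capacity vectors n_0, n_1, n_2, … : I → ℝ with n_0 i ≥ 0 for all i, where at each step k a nonempty subset V_k ⊆ { i ∈ I : n_k i > 0 } is chosen, σ_k = min_{i ∈ V_k} (n_k i / f i), and n_{k+1} i = n_k i − σ_k · f i for i ∈ V_k while n_{k+1} i = n_k i for i ∉ V_k. Then every n_k is nonnegative, the set { i : n_k i > 0 } is strictly decreasing in k (at least one index with positive capacity is zeroed at each step), and consequently the process admits at most |I| steps. -/

import Mathlib

/-! Each step zeroes the selected instance attaining the bottleneck `σ_k` and never revives an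
instance whose capacity is already zero, so the positive-capacity sets form a strictly
decreasing chain of subsets of `I`, whose length is at most `|I|`. -/

theorem Set.le_card_of_ssubset_chain {α : Type*} [Finite α] {S : ℕ → Set α} {K : ℕ}
    (hS : ∀ k < K, S (k + 1) ⊂ S k) : K ≤ Nat.card α := by
  have hdecr : ∀ k ≤ K, k + (S k).ncard ≤ (S 0).ncard := by
    intro k
    induction k with
    | zero => intro _; simp
    | succ k ih =>
      intro hk
      have hlt := Set.ncard_lt_ncard (hS k hk)
      have hle := ih (Nat.le_of_succ_le hk)
      omega
  calc K ≤ K + (S K).ncard := Nat.le_add_right _ _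
    _ ≤ (S 0).ncard := hdecr K le_rfl
    _ ≤ Nat.card α := Set.ncard_le_card _

section GreedyStep

variable {I : Type*} {f c c' : I → ℝ} {V : Finset I} {hV : V.Nonempty}

theorem greedyStep_nonneg (hf : ∀ i ∈ V, 0 < f i) (hc : ∀ i, 0 ≤ c i)
    (hupd : ∀ i ∈ V, c' i = c i - V.inf' hV (fun j => c j / f j) * f i)
    (hkeep : ∀ i ∉ V, c' i = c i) (i : I) : 0 ≤ c' i := by
  by_cases hi : i ∈ V
  · have hσ : V.inf' hV (fun j => c j / f j) * f i ≤ c i :=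
      (le_div_iff₀ (hf i hi)).1 (V.inf'_le _ hi)
    rw [hupd i hi]
    linarith
  · rw [hkeep i hi]
    exact hc i

theorem greedyStep_pos_ssubset (hf : ∀ i ∈ V, 0 < f i) (hc : ∀ i ∈ V, 0 < c i)
    (hupd : ∀ i ∈ V, c' i = c i - V.inf' hV (fun j => c j / f j) * f i)
    (hkeep : ∀ i ∉ V, c' i = c i) : {i | 0 < c' i} ⊂ {i | 0 < c i} := by
  refine ⟨fun i hi => ?_, fun hsub => ?_⟩
  · by_cases hiV : i ∈ V
    · exact hc i hiV
    · change 0 < c i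
      rw [← hkeep i hiV]
      exact hi
  · obtain ⟨i, hiV, hσ⟩ := V.exists_mem_eq_inf' hV (fun j => c j / f j)
    have hzero : c' i = 0 := by
      rw [hupd i hiV, hσ, div_mul_cancel₀ _ (hf i hiV).ne', sub_self]
    have hpos : 0 < c' i := hsub (hc i hiV)
    exact hpos.ne' hzero

end GreedyStep

/-- OrbitChain's greedy routing process: at each step `k < K` a nonempty set
`V k` of instances with strictly positive residual capacity is chosen, the
bottleneck capacity `σ_k = min_{i ∈ V k} (n k i / f i)` is assigned, and
capacities of selected instances are decremented by `σ_k * f i`.  Then all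
capacities stay nonnegative, the set of positive-capacity instances strictly
decreases at every step, and hence there are at most `|I|` steps. -/
theorem greedy_routing_terminates
    {I : Type*} [Fintype I]
    (f : I → ℝ) (hf : ∀ i, 0 < f i)
    (n : ℕ → I → ℝ) (hn0 : ∀ i, 0 ≤ n 0 i)
    (K : ℕ) (V : ℕ → Finset I)
    (hVne : ∀ k, k < K → (V k).Nonempty)
    (hVpos : ∀ k, k < K → ∀ i ∈ V k, 0 < n k i)
    (hupd : ∀ k (hk : k < K), ∀ i ∈ V k,
      n (k + 1) i = n k i - (V k).inf' (hVne k hk) (fun j => n k j / f j) * f i)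
    (hkeep : ∀ k, k < K → ∀ i ∉ V k, n (k + 1) i = n k i) :
    (∀ k, k ≤ K → ∀ i, 0 ≤ n k i) ∧
    (∀ k, k < K → {i | 0 < n (k + 1) i} ⊂ {i | 0 < n k i}) ∧
    K ≤ Fintype.card I := by
  have hnonneg : ∀ k, k ≤ K → ∀ i, 0 ≤ n k i := by
    intro k
    induction k with
    | zero => exact fun _ => hn0
    | succ k ih =>
      intro hk
      exact greedyStep_nonneg (fun i _ => hf i) (ih (Nat.le_of_succ_le hk))
        (hupd k hk) (hkeep k hk)
  have hssub : ∀ k, k < K → {i | 0 < n (k + 1) i} ⊂ {i | 0 < n k i} := fun k hk =>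
    greedyStep_pos_ssubset (fun i _ => hf i) (hVpos k hk) (hupd k hk) (hkeep k hk)
  refine ⟨hnonneg, hssub, ?_⟩
  exact (Set.le_card_of_ssubset_chain (S := fun k => {i | 0 < n k i}) hssub).trans_eq
    Nat.card_eq_fintype_card
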